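/- arXiv:2211.06563 — 2 statements merged into one kernel-verified Lean document; each statement's English description precedes it below -/
import Mathlib

section
/- Let K be a field, let S = ⋃_{k≥1} {10^k·n + k − 1 : n ≥ 1} ⊆ ℕ, and let A = K⟨x_1, x_2, x_3⟩/I, where I is the two-sided ideal generated by all monomials that do not occur as a factor of any right-infinite word x_{ε_1} x_{ε_2} x_{ε_3} ⋯ with ε_i ∈ {1,2,3} for all i and ε_i = 1 if and only if i ∈ S. Then the two-sided ideal of A generated by x_2 and x_3 is locally nilpotent: every finitely generated non-unital K-subalgebra B contained in this ideal is nilpotent, i.e., there exists m ≥ 1 such that every product of m elements of B is zero. -/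
noncomputable section

namespace Paper

open Module Filter MulOpposite

/-- The free associative unital `K`-algebra on a set `σ` of generators,
realized as the monoid algebra of the free monoid on `σ`. -/
abbrev FreeAlg (K : Type) [Field K] (σ : Type) : Type := MonoidAlgebra K (FreeMonoid σ)

/-- The monomial of the free algebra corresponding to a word `w`. -/
def wrd (K : Type) [Field K] {σ : Type} (w : List σ) : FreeAlg K σ :=
  MonoidAlgebra.of K (FreeMonoid σ) (FreeMonoid.ofList w)

variable (K : Type) [Field K]

section Defs

variable {σ : Type} {A : Type} [Ring A] [Algebra K A]

/-- `a` is a monomial of `A` (i.e. the image of a word under the presentation `π`). -/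
def IsMono (π : FreeAlg K σ →ₐ[K] A) (a : A) : Prop :=
  ∃ w : List σ, a = π (wrd K w)

/-- `a` is a monomial of `A` of length `D`. -/
def IsMonoLen (π : FreeAlg K σ →ₐ[K] A) (D : ℕ) (a : A) : Prop :=
  ∃ w : List σ, w.length = D ∧ a = π (wrd K w)

/-- `π` presents `A` as a monomial algebra: `π` is onto and its kernel is spanned by the
monomials it contains (equivalently, it is generated as a two-sided ideal by monomials). -/
def MonomialPresentation (π : FreeAlg K σ →ₐ[K] A) : Prop :=
  Function.Surjective π ∧
    ∀ a : FreeAlg K σ, π a = 0 ↔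
      a ∈ Submodule.span K {m : FreeAlg K σ | ∃ w : List σ, m = wrd K w ∧ π (wrd K w) = 0}

/-- Every nonzero monomial of `A` is right prolongable. -/
def RightProlongable (π : FreeAlg K σ →ₐ[K] A) : Prop :=
  ∀ a : A, IsMono K π a → a ≠ 0 → ∃ w : List σ, w ≠ [] ∧ a * π (wrd K w) ≠ 0

/-- A subspace of `A` spanned by monomials. -/
def MonomialSubspace (π : FreeAlg K σ →ₐ[K] A) (L : Submodule K A) : Prop :=
  ∃ S : Set (List σ), L = Submodule.span K ((fun w => π (wrd K w)) '' S)

/-- The standard generating subspace, spanned by `1` together with the generators. -/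
def genV (π : FreeAlg K σ →ₐ[K] A) : Submodule K A :=
  Submodule.span K ({1} ∪ Set.range fun i : σ => π (wrd K [i]))

end Defs

section Amen

/-- `L` is a `(V, ε)`-invariant subspace of `A`, viewed as a right module over itself:
`dim (L·V) < (1+ε) · dim L`. -/
def RInv {A : Type} [Ring A] [Algebra K A] (L V : Submodule K A) (ε : ℝ) : Prop :=
  FiniteDimensional K L ∧ FiniteDimensional K (L * V : Submodule K A) ∧
    (finrank K (L * V : Submodule K A) : ℝ) < (1 + ε) * (finrank K L : ℝ)

/-- `L` is a `(V, ε)`-invariant subspace of `A`, viewed as a left module over itself. -/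
def LInv {A : Type} [Ring A] [Algebra K A] (L V : Submodule K A) (ε : ℝ) : Prop :=
  FiniteDimensional K L ∧ FiniteDimensional K (V * L : Submodule K A) ∧
    (finrank K (V * L : Submodule K A) : ℝ) < (1 + ε) * (finrank K L : ℝ)

/-- `A` is amenable as a right module over itself. -/
def RightSelfAmenable (A : Type) [Ring A] [Algebra K A] : Prop :=
  ∀ V : Submodule K A, FiniteDimensional K V → ∀ ε : ℝ, 0 < ε →
    ∃ L : Submodule K A, RInv K L V ε

/-- `A` is exhaustively amenable as a right module over itself. -/
def RightSelfExhAmenable (A : Type) [Ring A] [Algebra K A] : Prop :=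
  ∀ V : Submodule K A, FiniteDimensional K V → ∀ ε : ℝ, 0 < ε →
    ∀ W : Submodule K A, FiniteDimensional K W →
      ∃ L : Submodule K A, W ≤ L ∧ RInv K L V ε

/-- `A` is exhaustively amenable as a left module over itself. -/
def LeftSelfExhAmenable (A : Type) [Ring A] [Algebra K A] : Prop :=
  ∀ V : Submodule K A, FiniteDimensional K V → ∀ ε : ℝ, 0 < ε →
    ∀ W : Submodule K A, FiniteDimensional K W →
      ∃ L : Submodule K A, W ≤ L ∧ LInv K L V ε

/-- For a right `A`-module `M` (encoded via an `Aᵐᵒᵖ`-action), the subspace `L·V`,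
spanned by `{ℓ·v : ℓ ∈ L, v ∈ V}`. -/
def rLV {A M : Type} [Ring A] [Algebra K A] [AddCommGroup M] [Module K M] [Module Aᵐᵒᵖ M]
    (L : Submodule K M) (V : Submodule K A) : Submodule K M :=
  Submodule.span K {x : M | ∃ l ∈ L, ∃ v ∈ V, x = (op v) • l}

/-- `L` is a `(V, ε)`-invariant subspace of the right `A`-module `M`. -/
def RModInv {A M : Type} [Ring A] [Algebra K A] [AddCommGroup M] [Module K M] [Module Aᵐᵒᵖ M]
    (L : Submodule K M) (V : Submodule K A) (ε : ℝ) : Prop :=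
  FiniteDimensional K L ∧ FiniteDimensional K (rLV K L V) ∧
    (finrank K (rLV K L V) : ℝ) < (1 + ε) * (finrank K L : ℝ)

/-- The right `A`-module `M` is amenable. -/
def RModAmenable (A M : Type) [Ring A] [Algebra K A] [AddCommGroup M] [Module K M]
    [Module Aᵐᵒᵖ M] [IsScalarTower K Aᵐᵒᵖ M] : Prop :=
  ∀ V : Submodule K A, FiniteDimensional K V → ∀ ε : ℝ, 0 < ε →
    ∃ L : Submodule K M, RModInv K L V ε

/-- The right `A`-module `M` is exhaustively amenable. -/
def RModExhAmenable (A M : Type) [Ring A] [Algebra K A] [AddCommGroup M] [Module K M]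
    [Module Aᵐᵒᵖ M] [IsScalarTower K Aᵐᵒᵖ M] : Prop :=
  ∀ V : Submodule K A, FiniteDimensional K V → ∀ ε : ℝ, 0 < ε →
    ∀ W : Submodule K M, FiniteDimensional K W →
      ∃ L : Submodule K M, W ≤ L ∧ RModInv K L V ε

/-- For a left `A`-module `M`, the subspace `V·L`, spanned by `{v·ℓ : ℓ ∈ L, v ∈ V}`. -/
def lVL {A M : Type} [Ring A] [Algebra K A] [AddCommGroup M] [Module K M] [Module A M]
    (L : Submodule K M) (V : Submodule K A) : Submodule K M :=
  Submodule.span K {x : M | ∃ l ∈ L, ∃ v ∈ V, x = v • l}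

/-- `L` is a `(V, ε)`-invariant subspace of the left `A`-module `M`. -/
def LModInv {A M : Type} [Ring A] [Algebra K A] [AddCommGroup M] [Module K M] [Module A M]
    (L : Submodule K M) (V : Submodule K A) (ε : ℝ) : Prop :=
  FiniteDimensional K L ∧ FiniteDimensional K (lVL K L V) ∧
    (finrank K (lVL K L V) : ℝ) < (1 + ε) * (finrank K L : ℝ)

/-- The left `A`-module `M` is exhaustively amenable. -/
def LModExhAmenable (A M : Type) [Ring A] [Algebra K A] [AddCommGroup M] [Module K M]
    [Module A M] [IsScalarTower K A M] : Prop :=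
  ∀ V : Submodule K A, FiniteDimensional K V → ∀ ε : ℝ, 0 < ε →
    ∀ W : Submodule K M, FiniteDimensional K W →
      ∃ L : Submodule K M, W ≤ L ∧ LModInv K L V ε

/-- A Følner sequence for `A` as a right module over itself, with respect to the
generating subspace `V`. -/
def FolnerSeq {A : Type} [Ring A] [Algebra K A] (V : Submodule K A)
    (L : ℕ → Submodule K A) : Prop :=
  Monotone L ∧ (∀ n, FiniteDimensional K (L n)) ∧ (⨆ n, L n) = (⊤ : Submodule K A) ∧
    Tendsto (fun n => (finrank K (L n * V : Submodule K A) : ℝ) / (finrank K (L n) : ℝ))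
      atTop (nhds 1)

/-- The isoperimetric profile of `A` with respect to `V`:
`I(n) = inf {dim((W·V + W)/W) : dim W = n}`. -/
def isoProfile {A : Type} [Ring A] [Algebra K A] (V : Submodule K A) (n : ℕ) : ℕ :=
  sInf {k : ℕ | ∃ W : Submodule K A, FiniteDimensional K W ∧ finrank K W = n ∧
    FiniteDimensional K (W ⊔ W * V : Submodule K A) ∧
    k = finrank K (W ⊔ W * V : Submodule K A) - finrank K W}

end Amen

section Words

variable {σ : Type}

/-- The shift on bi-infinite words. -/
def shiftZ (s : ℤ → σ) : ℤ → σ := fun n => s (n + 1)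

/-- The word `u` occurs in the bi-infinite word `s` at position `k`. -/
def OccursAt (u : List σ) (s : ℤ → σ) (k : ℤ) : Prop :=
  ∀ i : Fin u.length, s (k + (i : ℕ)) = u.get i

/-- `u` is a (finite) factor of the bi-infinite word `s`. -/
def FactorZ (u : List σ) (s : ℤ → σ) : Prop := ∃ k : ℤ, OccursAt u s k

/-- `u` is a factor of the subshift `X`. -/
def FactorOfX (u : List σ) (X : Set (ℤ → σ)) : Prop := ∃ s ∈ X, FactorZ u s

/-- `s` is recurrent: every factor occurs at infinitely many positions. -/
def RecurrentZ (s : ℤ → σ) : Prop :=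
  ∀ u : List σ, FactorZ u s → {k : ℤ | OccursAt u s k}.Infinite

/-- `s` is uniformly recurrent: for every factor `u` there is `N` such that every
factor of `s` of length `N` contains an occurrence of `u`. -/
def UnifRecurrentZ (s : ℤ → σ) : Prop :=
  ∀ u : List σ, FactorZ u s → ∃ N : ℕ, ∀ v : List σ, FactorZ v s → v.length = N → u <:+: v

/-- `X ⊆ σ^ℤ` is a subshift: nonempty, closed and shift-invariant. -/
def IsSubshift [TopologicalSpace σ] (X : Set (ℤ → σ)) : Prop :=
  X.Nonempty ∧ IsClosed X ∧ ∀ s ∈ X, shiftZ s ∈ X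

/-- `X` is a minimal subshift. -/
def IsMinimalSubshift [TopologicalSpace σ] (X : Set (ℤ → σ)) : Prop :=
  IsSubshift X ∧
    ∀ Y : Set (ℤ → σ), Y ⊆ X → IsClosed Y → (∀ s ∈ Y, shiftZ s ∈ Y) → Y = ∅ ∨ Y = X

/-- `X` is a transitive subshift: some element has dense shift-orbit. -/
def IsTransitiveSubshift [TopologicalSpace σ] (X : Set (ℤ → σ)) : Prop :=
  IsSubshift X ∧ ∃ s ∈ X, closure {t : ℤ → σ | ∃ n : ℤ, t = fun m => s (m + n)} = X

/-- The word `u` occurs in the right-infinite word `s` at position `k`. -/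
def OccursAtN (u : List σ) (s : ℕ → σ) (k : ℕ) : Prop :=
  ∀ i : Fin u.length, s (k + (i : ℕ)) = u.get i

/-- `u` is a factor of the right-infinite word `s`. -/
def FactorN (u : List σ) (s : ℕ → σ) : Prop := ∃ k : ℕ, OccursAtN u s k

/-- A right-infinite word is uniformly recurrent. -/
def UnifRecurrentN (s : ℕ → σ) : Prop :=
  ∀ u : List σ, FactorN u s → ∃ N : ℕ, ∀ v : List σ, FactorN v s → v.length = N → u <:+: v

end Words

end Paper

namespace Paper

open Module

/-- The set `S = ⋃_{k ≥ 1} {10^k · n + k − 1 : n ≥ 1}`. -/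
def Sset : Set ℕ := {m : ℕ | ∃ k, 1 ≤ k ∧ ∃ n, 1 ≤ n ∧ m = 10 ^ k * n + k - 1}

/-- A word over the alphabet `{x_1, x_2, x_3}` (encoded as `{0, 1, 2} = Fin 3`) is *good*
if it occurs as a factor of some right-infinite word `x_{ε_1} x_{ε_2} x_{ε_3} ⋯` with
`ε_i = 1` (i.e. `ε i = 0` in our encoding) if and only if `i ∈ S`. -/
def goodWord (w : List (Fin 3)) : Prop :=
  ∃ ε : ℕ → Fin 3, (∀ i : ℕ, 1 ≤ i → (ε i = 0 ↔ i ∈ Sset)) ∧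
    ∃ t : ℕ, ∀ j : Fin w.length, w.get j = ε (t + (j : ℕ) + 1)

/-!
The ideal `J` is spanned by the monomials containing `x_2` or `x_3`, so the finitely many
generators of `B` lie in the span of such monomials of length at most `D`, and a product of
`m` elements of `B` is a combination of concatenations of `m` such blocks. A concatenation of
blocks has no run of `2D + 1` letters `x_1`. On the other hand `S` contains the run
`10^K n, …, 10^K n + K - 1` for every `n ≥ 1`, so for `K = 2D + 1` every good word of length
at least `10^K + K` contains `x_1^K`. Hence all these products vanish once `m ≥ 10^K + K`.
-/

section Blocks

variable {σ : Type}

def blockWords (W : Set (List σ)) (m : ℕ) : Set (List σ) :=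
  {w | ∃ bs : List (List σ), m ≤ bs.length ∧ (∀ b ∈ bs, b ∈ W) ∧ bs.flatten = w}

variable {W : Set (List σ)}

theorem blockWords_antitone : Antitone (blockWords W) := by
  rintro m n hmn w ⟨bs, hlen, hbs, rfl⟩
  exact ⟨bs, hmn.trans hlen, hbs, rfl⟩

theorem subset_blockWords_one : W ⊆ blockWords W 1 :=
  fun b hb => ⟨[b], le_rfl, by simpa using hb, List.flatten_singleton⟩

theorem nil_mem_blockWords_zero : [] ∈ blockWords W 0 :=
  ⟨[], le_rfl, by simp, rfl⟩

theorem append_mem_blockWords {u v : List σ} {m n : ℕ} (hu : u ∈ blockWords W m)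
    (hv : v ∈ blockWords W n) : u ++ v ∈ blockWords W (m + n) := by
  obtain ⟨bs, hm, hbs, rfl⟩ := hu
  obtain ⟨cs, hn, hcs, rfl⟩ := hv
  refine ⟨bs ++ cs, by simp; omega, fun b hb => ?_, List.flatten_append⟩
  rcases List.mem_append.mp hb with hb | hb
  exacts [hbs b hb, hcs b hb]

theorem le_length_of_mem_blockWords (hW : ∀ b ∈ W, b ≠ []) {w : List σ} {m : ℕ}
    (hw : w ∈ blockWords W m) : m ≤ w.length := by
  obtain ⟨bs, hm, hbs, rfl⟩ := hw
  refine hm.trans ?_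
  clear hm
  induction bs with
  | nil => simp
  | cons b bs ih =>
    have hb : 0 < b.length := List.length_pos_iff.mpr (hW b (hbs b (by simp)))
    have := ih fun c hc => hbs c (by simp [hc])
    simp only [List.length_cons, List.flatten_cons, List.length_append]
    omega

variable {a : σ} {D : ℕ}

theorem length_le_of_prefix_flatten {bs : List (List σ)}
    (hbs : ∀ b ∈ bs, (∃ x ∈ b, x ≠ a) ∧ b.length ≤ D) {u : List σ}
    (hu : u <+: bs.flatten) (ha : ∀ x ∈ u, x = a) : u.length ≤ D := by
  cases bs with
  | nil => simp_all
  | cons b bs =>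
    obtain ⟨⟨x, hx, hxa⟩, hbD⟩ := hbs b (by simp)
    rw [List.flatten_cons] at hu
    rcases List.prefix_or_prefix_of_prefix hu (List.prefix_append b _) with hub | hbu
    · exact hub.length_le.trans hbD
    · exact absurd (ha x (hbu.subset hx)) hxa

theorem length_le_of_infix_flatten {bs : List (List σ)}
    (hbs : ∀ b ∈ bs, (∃ x ∈ b, x ≠ a) ∧ b.length ≤ D) {u : List σ}
    (hu : u <:+: bs.flatten) (ha : ∀ x ∈ u, x = a) : u.length ≤ 2 * D := by
  induction bs with
  | nil => simp_all
  | cons b bs ih =>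
    have hbD := (hbs b (by simp)).2
    have hbs' : ∀ c ∈ bs, (∃ x ∈ c, x ≠ a) ∧ c.length ≤ D :=
      fun c hc => hbs c (by simp [hc])
    rw [List.flatten_cons, List.infix_append_iff] at hu
    rcases hu with hub | hus | ⟨u₁, u₂, rfl, hu₁, hu₂⟩
    · linarith [hub.length_le]
    · exact ih hbs' hus
    · have h₁ := hu₁.length_le
      have h₂ := length_le_of_prefix_flatten hbs' hu₂ fun x hx => ha x (by simp [hx])
      simp only [List.length_append]
      omega

theorem not_replicate_infix_flatten {bs : List (List σ)}
    (hbs : ∀ b ∈ bs, (∃ x ∈ b, x ≠ a) ∧ b.length ≤ D) :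
    ¬ List.replicate (2 * D + 1) a <:+: bs.flatten := fun h => by
  have := length_le_of_infix_flatten hbs h fun x hx => List.eq_of_mem_replicate hx
  simp at this

end Blocks

theorem mul_add_mem_Sset {K n j : ℕ} (hn : 1 ≤ n) (hj : j < K) : 10 ^ K * n + j ∈ Sset := by
  refine ⟨j + 1, by omega, 10 ^ (K - (j + 1)) * n, ?_, ?_⟩
  · exact Nat.one_le_iff_ne_zero.mpr (by positivity)
  · rw [← mul_assoc, ← pow_add, Nat.add_sub_cancel' hj]
    omega

theorem goodWord.replicate_infix {w : List (Fin 3)} (hw : goodWord w) {K : ℕ}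
    (hK : 10 ^ K + K ≤ w.length) : List.replicate K 0 <:+: w := by
  obtain ⟨ε, hε, t, ht⟩ := hw
  set T := 10 ^ K
  have hT : 0 < T := by positivity
  -- the first multiple of `10 ^ K` after position `t` starts a run of `K` letters `x_1`
  have h₁ : t < T * (t / T + 1) := by
    rw [mul_add_one]; exact Nat.lt_div_mul_add hT |>.trans_eq (by ring)
  have h₂ : T * (t / T + 1) ≤ t + T := by
    rw [mul_add_one]; linarith [Nat.mul_div_le t T]
  refine List.infix_iff_getElem?.mpr
    ⟨T * (t / T + 1) - (t + 1), by simp; omega, fun i hi => ?_⟩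
  simp only [List.length_replicate] at hi
  have hpos : i + (T * (t / T + 1) - (t + 1)) < w.length := by omega
  rw [List.getElem?_eq_getElem hpos, List.getElem_replicate]
  have := ht ⟨_, hpos⟩
  simp only [List.get_eq_getElem] at this
  rw [this, Option.some_inj, hε _ (by omega)]
  convert mul_add_mem_Sset (K := K) (Nat.le_add_left 1 (t / T)) hi using 1
  change _ = T * (t / T + 1) + i
  omega

section MonomialSpan

variable {K : Type} [Field K] {σ A : Type} [Ring A] [Algebra K A]

theorem wrd_append (u v : List σ) : wrd K (u ++ v) = wrd K u * wrd K v := by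
  simp only [wrd, FreeMonoid.ofList_append, map_mul]

theorem span_range_wrd : Submodule.span K (Set.range (wrd K : List σ → FreeAlg K σ)) = ⊤ := by
  rw [eq_top_iff]
  rintro f -
  induction f using MonoidAlgebra.induction_on with
  | of g => exact Submodule.subset_span ⟨FreeMonoid.toList g, by simp [wrd]⟩
  | add f g hf hg => exact Submodule.add_mem _ hf hg
  | smul r f hf => exact Submodule.smul_mem _ _ hf

def monomialSpan (π : FreeAlg K σ →ₐ[K] A) (W : Set (List σ)) : Submodule K A :=
  Submodule.span K ((fun w => π (wrd K w)) '' W)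

variable {π : FreeAlg K σ →ₐ[K] A}

theorem monomialSpan_mono : Monotone (monomialSpan π) :=
  fun _ _ h => Submodule.span_mono (Set.image_mono h)

theorem monomial_mem_monomialSpan {W : Set (List σ)} {w : List σ} (hw : w ∈ W) :
    π (wrd K w) ∈ monomialSpan π W :=
  Submodule.subset_span ⟨w, hw, rfl⟩

theorem monomialSpan_univ (hπ : Function.Surjective π) : monomialSpan π Set.univ = ⊤ := by
  have : monomialSpan π Set.univ = (Submodule.span K (Set.range (wrd K))).map π.toLinearMap := by
    rw [Submodule.map_span, ← Set.range_comp, ← Set.image_univ]; rfl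
  rw [this, span_range_wrd, Submodule.map_top, LinearMap.range_eq_top]
  exact hπ

theorem monomialSpan_mul_le {U V W : Set (List σ)} (h : ∀ u ∈ U, ∀ v ∈ V, u ++ v ∈ W) :
    monomialSpan π U * monomialSpan π V ≤ monomialSpan π W := by
  rw [monomialSpan, monomialSpan, Submodule.span_mul_span, Submodule.span_le]
  rintro _ ⟨_, ⟨u, hu, rfl⟩, _, ⟨v, hv, rfl⟩, rfl⟩
  simpa [wrd_append] using monomial_mem_monomialSpan (π := π) (h u hu v hv)

theorem mul_mul_mem_monomialSpan (hπ : Function.Surjective π) {W : Set (List σ)}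
    (hW : ∀ u w v, w ∈ W → u ++ w ++ v ∈ W) (a b : A) {x : A}
    (hx : x ∈ monomialSpan π W) :
    a * x * b ∈ monomialSpan π W := by
  have ha : a ∈ monomialSpan π Set.univ := monomialSpan_univ hπ ▸ Submodule.mem_top
  have hb : b ∈ monomialSpan π Set.univ := monomialSpan_univ hπ ▸ Submodule.mem_top
  have hax := monomialSpan_mul_le (fun u _ w hw => by simpa using hW u w [] hw)
    (Submodule.mul_mem_mul ha hx)
  exact monomialSpan_mul_le (fun w hw v _ => hW [] w v hw) (Submodule.mul_mem_mul hax hb)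

theorem monomialSpan_eq_iSup_length_le (W : Set (List σ)) :
    monomialSpan π W = ⨆ D, monomialSpan π {w ∈ W | w.length ≤ D} := by
  simp only [monomialSpan]
  rw [← Submodule.span_iUnion, ← Set.image_iUnion]
  congr 2
  ext w
  simpa using fun _ => ⟨w.length, le_rfl⟩

theorem monotone_monomialSpan_length_le (W : Set (List σ)) :
    Monotone fun D : ℕ => monomialSpan π {w ∈ W | w.length ≤ D} :=
  fun _ _ hDE => monomialSpan_mono fun _ hw => ⟨hw.1, hw.2.trans hDE⟩

theorem exists_forall_mem_monomialSpan_length_le {W : Set (List σ)} (G : Finset A)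
    (hG : ∀ g ∈ G, g ∈ monomialSpan π W) :
    ∃ D, ∀ g ∈ G, g ∈ monomialSpan π {w ∈ W | w.length ≤ D} := by
  have hdir := monotone_monomialSpan_length_le (π := π) W
  have : ∀ g : G, ∃ D, (g : A) ∈ monomialSpan π {w ∈ W | w.length ≤ D} := by
    intro g
    have hg := hG g g.2
    rw [monomialSpan_eq_iSup_length_le] at hg
    exact (Submodule.mem_iSup_of_directed _ hdir.directed_le).mp hg
  choose D hD using this
  refine ⟨Finset.univ.sup D, fun g hg => ?_⟩
  have hle : D ⟨g, hg⟩ ≤ Finset.univ.sup D := Finset.le_sup (Finset.mem_univ _)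
  exact hdir hle (hD ⟨g, hg⟩)

theorem monomialSpan_eq_bot {W : Set (List σ)} (hW : ∀ w ∈ W, π (wrd K w) = 0) :
    monomialSpan π W = ⊥ :=
  Submodule.span_eq_bot.mpr (by simpa using hW)

theorem mul_mem_monomialSpan_blockWords {W : Set (List σ)} {m n : ℕ} {x y : A}
    (hx : x ∈ monomialSpan π (blockWords W m)) (hy : y ∈ monomialSpan π (blockWords W n)) :
    x * y ∈ monomialSpan π (blockWords W (m + n)) :=
  monomialSpan_mul_le (fun _ hu _ hv => append_mem_blockWords hu hv)
    (Submodule.mul_mem_mul hx hy)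

theorem list_prod_mem_monomialSpan_blockWords {W : Set (List σ)} {l : List A}
    (hl : ∀ x ∈ l, x ∈ monomialSpan π (blockWords W 1)) :
    l.prod ∈ monomialSpan π (blockWords W l.length) := by
  induction l with
  | nil =>
    simpa only [List.prod_nil, List.length_nil, wrd, FreeMonoid.ofList_nil, map_one] using
      monomial_mem_monomialSpan (π := π) (nil_mem_blockWords_zero (W := W))
  | cons x l ih =>
    rw [List.prod_cons, List.length_cons, add_comm]
    exact mul_mem_monomialSpan_blockWords (hl x (by simp)) (ih fun y hy => hl y (by simp [hy]))

theorem adjoin_subset_monomialSpan_blockWords_one {W : Set (List σ)} {s : Set A}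
    (hs : s ⊆ monomialSpan π W) :
    (NonUnitalAlgebra.adjoin K s : Set A) ⊆ monomialSpan π (blockWords W 1) :=
  NonUnitalAlgebra.adjoin_le
    (S := (monomialSpan π (blockWords W 1)).toNonUnitalSubalgebra fun _ _ hx hy =>
      monomialSpan_mono (blockWords_antitone (by norm_num))
        (mul_mem_monomialSpan_blockWords hx hy))
    fun _ hx => monomialSpan_mono subset_blockWords_one (hs hx)

end MonomialSpan

theorem not_goodWord_of_mem_blockWords {D : ℕ} {w : List (Fin 3)}
    (hw : w ∈ blockWords {b | (∃ x ∈ b, x ≠ 0) ∧ b.length ≤ D}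
      (10 ^ (2 * D + 1) + (2 * D + 1))) :
    ¬ goodWord w := fun hgood => by
  have hlen := le_length_of_mem_blockWords (fun _ hb => List.ne_nil_of_mem hb.1.choose_spec.1) hw
  obtain ⟨bs, -, hbs, rfl⟩ := hw
  exact not_replicate_infix_flatten hbs (hgood.replicate_infix hlen)

/-- local nilpotence of the ideal `⟨x_2, x_3⟩`. With
`A = K⟨x_1, x_2, x_3⟩ / I` as above, the two-sided ideal of `A` generated by `x_2` and
`x_3` is locally nilpotent: every finitely generated non-unital `K`-subalgebra `B`
contained in this ideal is nilpotent, i.e. there is `m ≥ 1` such that every product of `m`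
elements of `B` is zero. -/
theorem stmt16 (K : Type) [Field K]
    (A : Type) [Ring A] [Algebra K A] (π : FreeAlg K (Fin 3) →ₐ[K] A)
    (hsurj : Function.Surjective π)
    (hker : ∀ a : FreeAlg K (Fin 3), π a = 0 ↔
      a ∈ Submodule.span K
        {m : FreeAlg K (Fin 3) | ∃ w : List (Fin 3), m = wrd K w ∧ ¬ goodWord w})
    (J : Submodule K A)
    (hJ : J = Submodule.span K {x : A | ∃ a b g : A,
      (g = π (wrd K [1]) ∨ g = π (wrd K [2])) ∧ x = a * g * b}) :
    ∀ B : NonUnitalSubalgebra K A,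
      (∃ G : Finset A, B = NonUnitalAlgebra.adjoin K (G : Set A)) →
      (B : Set A) ⊆ (J : Set A) →
      ∃ m : ℕ, 1 ≤ m ∧ ∀ l : List A, l.length = m → (∀ g ∈ l, g ∈ B) → l.prod = 0 := by
  rintro B ⟨G, rfl⟩ hBJ
  set Z : Set (List (Fin 3)) := {w | ∃ x ∈ w, x ≠ 0}
  have hJZ : J ≤ monomialSpan π Z := by
    rw [hJ, Submodule.span_le]
    rintro _ ⟨a, b, g, hg, rfl⟩
    refine mul_mul_mem_monomialSpan hsurj ?_ a b ?_
    · rintro u w v ⟨x, hx, hx0⟩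
      exact ⟨x, by simp [hx], hx0⟩
    · rcases hg with rfl | rfl <;>
        exact monomial_mem_monomialSpan ⟨_, List.mem_singleton_self _, by decide⟩
  obtain ⟨D, hD⟩ := exists_forall_mem_monomialSpan_length_le G fun g hg =>
    hJZ (hBJ (NonUnitalAlgebra.subset_adjoin K hg))
  have hB := adjoin_subset_monomialSpan_blockWords_one (s := (G : Set A)) hD
  refine ⟨10 ^ (2 * D + 1) + (2 * D + 1), Nat.le_add_left 1 _, fun l hl hlB => ?_⟩
  have hprod := list_prod_mem_monomialSpan_blockWords fun x hx => hB (hlB x hx)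
  rwa [hl, monomialSpan_eq_bot, Submodule.mem_bot] at hprod
  exact fun w hw =>
    (hker _).mpr (Submodule.subset_span ⟨w, rfl, not_goodWord_of_mem_blockWords hw⟩)

end Paper
end
end

section
/- Let K be a field, A a K-algebra, and M an infinite-dimensional right A-module. Then M is exhaustively amenable if and only if for every finite-dimensional subspace V ≤ A, every ε > 0, and every N ∈ ℕ, there exists a (V,ε)-invariant finite-dimensional subspace L ≤ M with dim_K L ≥ N. -/
noncomputable section

namespace Paper

open Module MulOpposite

section Aux

variable {K A M : Type} [Field K] [Ring A] [Algebra K A]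
  [AddCommGroup M] [Module K M] [Module Aᵐᵒᵖ M] [IsScalarTower K Aᵐᵒᵖ M]

/-- The right action as a `K`-bilinear map `A →ₗ M →ₗ M`. -/
def rsmulBilin (K A M : Type) [Field K] [Ring A] [Algebra K A]
    [AddCommGroup M] [Module K M] [Module Aᵐᵒᵖ M] [IsScalarTower K Aᵐᵒᵖ M] :
    A →ₗ[K] M →ₗ[K] M where
  toFun v :=
    { toFun := fun m => (op v) • m
      map_add' := fun x y => smul_add _ x y
      map_smul' := fun k m => smul_comm (op v) k m }
  map_add' v w := by
    ext m
    simp [op_add, add_smul]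
  map_smul' k v := by
    ext m
    simp only [LinearMap.coe_mk, AddHom.coe_mk, RingHom.id_apply, LinearMap.smul_apply]
    rw [op_smul, smul_assoc]

lemma rLV_eq_map₂ (L : Submodule K M) (V : Submodule K A) :
    rLV K L V = Submodule.map₂ (rsmulBilin K A M) V L := by
  rw [Submodule.map₂_eq_span_image2]
  apply congrArg (Submodule.span K)
  ext x
  simp only [Set.mem_image2, Set.mem_setOf_eq, SetLike.mem_coe]
  constructor
  · rintro ⟨l, hl, v, hv, rfl⟩
    exact ⟨v, hv, l, hl, rfl⟩
  · rintro ⟨v, hv, l, hl, rfl⟩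
    exact ⟨l, hl, v, hv, rfl⟩

lemma rLV_mono {L L' : Submodule K M} (V : Submodule K A) (h : L ≤ L') :
    rLV K L V ≤ rLV K L' V := by
  rw [rLV_eq_map₂, rLV_eq_map₂]
  exact Submodule.map₂_le_map₂_right h

lemma rLV_sup (L L' : Submodule K M) (V : Submodule K A) :
    rLV K (L ⊔ L') V = rLV K L V ⊔ rLV K L' V := by
  rw [rLV_eq_map₂, rLV_eq_map₂, rLV_eq_map₂]
  exact Submodule.map₂_sup_right _ _ _ _

lemma rLV_fd (L : Submodule K M) (V : Submodule K A)
    [FiniteDimensional K L] [FiniteDimensional K V] :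
    FiniteDimensional K (rLV K L V) := by
  rw [rLV_eq_map₂]
  have hV : (V : Submodule K A).FG := (Module.Finite.iff_fg (N := V)).mp ‹_›
  have hL : (L : Submodule K M).FG := (Module.Finite.iff_fg (N := L)).mp ‹_›
  have := Submodule.FG.map₂ (rsmulBilin K A M) hV hL
  exact (Module.Finite.iff_fg (N := Submodule.map₂ (rsmulBilin K A M) V L)).mpr this

/-- An infinite-dimensional space contains finite-dimensional subspaces of every dimension. -/
lemma exists_fd_subspace_of_infinite (hM : ¬ FiniteDimensional K M) (N : ℕ) :
    ∃ W : Submodule K M, FiniteDimensional K W ∧ finrank K W = N := by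
  have hrank : (N : Cardinal) ≤ Module.rank K M := by
    have : ¬ Module.rank K M < Cardinal.aleph0 := by
      rw [Module.rank_lt_aleph0_iff]
      exact hM
    exact le_trans (le_of_lt (Cardinal.nat_lt_aleph0 N)) (not_lt.mp this)
  obtain ⟨s, hcard, hli⟩ := exists_finset_linearIndependent_of_le_rank hrank
  refine ⟨Submodule.span K (s : Set M), ?_, ?_⟩
  · exact FiniteDimensional.span_finset K s
  · rw [finrank_span_finset_eq_card hli, hcard]

end Aux

/-- Let `K` be a field, `A` a `K`-algebra and `M` an infinite-dimensional
right `A`-module. Then `M` is exhaustively amenable if and only if for every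
finite-dimensional subspace `V ≤ A`, every `ε > 0` and every `N ∈ ℕ` there is a
`(V, ε)`-invariant finite-dimensional subspace `L ≤ M` with `dim_K L ≥ N`. -/
theorem stmt17 (K : Type) [Field K] (A : Type) [Ring A] [Algebra K A]
    (M : Type) [AddCommGroup M] [Module K M] [Module Aᵐᵒᵖ M] [IsScalarTower K Aᵐᵒᵖ M]
    (hM : ¬ FiniteDimensional K M) :
    RModExhAmenable K A M ↔
      ∀ V : Submodule K A, FiniteDimensional K V → ∀ ε : ℝ, 0 < ε → ∀ N : ℕ,
        ∃ L : Submodule K M, N ≤ finrank K L ∧ RModInv K L V ε := by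
  constructor
  · -- exhaustive amenability ⇒ large invariant subspaces
    intro h V hV ε hε N
    obtain ⟨W, hWfd, hWrank⟩ := exists_fd_subspace_of_infinite (K := K) (M := M) hM N
    obtain ⟨L, hWL, hinv⟩ := h V hV ε hε W hWfd
    haveI := hinv.1
    haveI := hWfd
    refine ⟨L, ?_, hinv⟩
    rw [← hWrank]
    exact Submodule.finrank_mono hWL
  · -- large invariant subspaces ⇒ exhaustive amenability
    intro h V hV ε hε W hWfd
    haveI := hWfd
    haveI := hV
    haveI : FiniteDimensional K (rLV K W V) := rLV_fd W V
    set C : ℕ := finrank K (rLV K W V) with hC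
    set N : ℕ := Nat.ceil (2 * (C : ℝ) / ε) + 1 with hNdef
    obtain ⟨L', hN, hL'fd, hLV'fd, hlt⟩ := h V hV (ε / 2) (by positivity) N
    haveI := hL'fd
    haveI := hLV'fd
    refine ⟨L' ⊔ W, le_sup_right, ?_, ?_, ?_⟩
    · infer_instance
    · rw [rLV_sup]
      infer_instance
    · haveI : FiniteDimensional K (rLV K (L' ⊔ W) V) := by rw [rLV_sup]; infer_instance
      -- dimension counting
      have h1 : finrank K (rLV K (L' ⊔ W) V) ≤ finrank K (rLV K L' V) + C := by
        rw [rLV_sup]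
        exact Submodule.finrank_add_le_finrank_add_finrank _ _
      have h4 : finrank K L' ≤ finrank K (L' ⊔ W : Submodule K M) :=
        Submodule.finrank_mono le_sup_left
      have hNd : (N : ℝ) ≤ (finrank K L' : ℝ) := by exact_mod_cast hN
      have hceil : 2 * (C : ℝ) / ε ≤ (Nat.ceil (2 * (C : ℝ) / ε) : ℝ) := Nat.le_ceil _
      have hNgt : 2 * (C : ℝ) / ε < (N : ℝ) := by
        rw [hNdef]
        push_cast
        linarith
      have hd' : 2 * (C : ℝ) / ε < (finrank K L' : ℝ) := lt_of_lt_of_le hNgt hNd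
      have h3 : (C : ℝ) < (ε / 2) * (finrank K L' : ℝ) := by
        rw [div_lt_iff₀ hε] at hd'
        nlinarith
      have h1' : (finrank K (rLV K (L' ⊔ W) V) : ℝ) ≤
          (finrank K (rLV K L' V) : ℝ) + (C : ℝ) := by exact_mod_cast h1
      have h4' : (finrank K L' : ℝ) ≤ (finrank K (L' ⊔ W : Submodule K M) : ℝ) := by
        exact_mod_cast h4
      have h6 : (1 + ε) * (finrank K L' : ℝ) ≤
          (1 + ε) * (finrank K (L' ⊔ W : Submodule K M) : ℝ) := by
        apply mul_le_mul_of_nonneg_left h4'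
        linarith
      linarith [hlt]

end Paper
end
end
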